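/- arXiv:1410.8350 — 2 statements merged into one kernel-verified Lean document; each statement's English description precedes it below -/
import Mathlib

section
/- Let φ: S¹ → S¹ be a non-constant non-decreasing degree one map with good lift φ̃, and let h̃₁, h̃₂ ∈ H̃ be such that the maps h̃₁∘φ̃ and φ̃∘h̃₂ project to the same map of S¹, so that there is n: ℝ → ℤ with h̃₁(φ̃(x)) = φ̃(h̃₂(x)) + n(x). Then n is constant. -/
noncomputable section

/-- The circle `S¹ = ℝ/ℤ`. -/
abbrev Circle1 : Type := AddCircle (1 : ℝ)

/-- Membership in `H̃ = {h̃ ∈ Homeo⁺(ℝ) : h̃(x+1) = h̃(x)+1}`. -/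
def InHtilde (f : ℝ → ℝ) : Prop :=
  StrictMono f ∧ Function.Surjective f ∧ ∀ x : ℝ, f (x + 1) = f x + 1

/-- An orientation-preserving homeomorphism of the circle. -/
def IsOPH (f : Circle1 → Circle1) : Prop :=
  ∃ ft : ℝ → ℝ, (∀ x : ℝ, f (↑x) = ↑(ft x)) ∧ InHtilde ft

/-- A circle action of a group `Γ`: a homomorphism `Γ → Homeo⁺(S¹)`. -/
def IsCircleAction {Γ : Type*} [Group Γ] (ρ : Γ → Circle1 → Circle1) : Prop :=
  (∀ γ, IsOPH (ρ γ)) ∧ ρ 1 = id ∧ ∀ g h : Γ, ρ (g * h) = ρ g ∘ ρ h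

/-- A homomorphism `Γ → H̃`, given as a map into functions `ℝ → ℝ`. -/
def IsHtildeAction {Γ : Type*} [Group Γ] (ρt : Γ → ℝ → ℝ) : Prop :=
  (∀ γ, InHtilde (ρt γ)) ∧ ρt 1 = id ∧ ∀ g h : Γ, ρt (g * h) = ρt g ∘ ρt h

/-- `φt : ℝ → ℝ` is a good lift of `φ : S¹ → S¹`. -/
def GoodLift (φ : Circle1 → Circle1) (φt : ℝ → ℝ) : Prop :=
  (∀ x : ℝ, φ (↑x) = ↑(φt x)) ∧ Monotone φt ∧ ∀ x : ℝ, φt (x + 1) = φt x + 1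

/-!
Both `g = h̃₁ ∘ φ̃` and `f = φ̃ ∘ h̃₂` are monotone degree one lifts, so `n = g - f` is
`1`-periodic, and on a period `[a, a + 1]` it can only rise by `1`, since `g` rises by at
most `1` there and `f` does not decrease. If it does rise, from `a` to some `b`, then `f`
is constant on `[a, b]` and `g` is constant on `[b, a + 1]`; either way `g` stays in
`g a + ℤ`. Cancelling the homeomorphism `h̃₁`, `φ̃` stays in `φ̃ a + ℤ`, i.e. `φ` is constant.
-/

open Function

def InHtilde.toCircleDeg1Lift {h : ℝ → ℝ} (H : InHtilde h) : CircleDeg1Lift :=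
  ⟨⟨h, H.1.monotone⟩, H.2.2⟩

def GoodLift.toCircleDeg1Lift {φ : Circle1 → Circle1} {φt : ℝ → ℝ} (hφ : GoodLift φ φt) :
    CircleDeg1Lift :=
  ⟨⟨φt, hφ.2.1⟩, hφ.2.2⟩

theorem GoodLift.apply_eq_of_forall_exists_int {φ : Circle1 → Circle1} {φt : ℝ → ℝ}
    (hφ : GoodLift φ φt) {a : ℝ} (h : ∀ t, ∃ k : ℤ, φt t = φt a + k) (p q : Circle1) :
    φ p = φ q := by
  suffices key : ∀ t : ℝ, φ t = φ a by
    induction p using QuotientAddGroup.induction_on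
    induction q using QuotientAddGroup.induction_on
    exact (key _).trans (key _).symm
  intro t
  obtain ⟨k, hk⟩ := h t
  rw [hφ.1, hφ.1, hk]
  simp

namespace CircleDeg1Lift

theorem eq_add_int_of_map_eq {f : CircleDeg1Lift} (hf : Injective f) {x y : ℝ} {k : ℤ}
    (h : f x = f y + k) : x = y + k :=
  hf (by rw [f.map_add_int, h])

section Discrepancy

variable {f g : CircleDeg1Lift} {n : ℝ → ℤ}

theorem discrepancy_add_int (hn : ∀ x, g x = f x + n x) (x : ℝ) (m : ℤ) :
    n (x + m) = n x := by
  have h := hn (x + m)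
  rw [g.map_add_int, f.map_add_int, hn x] at h
  exact_mod_cast (by linarith : (n (x + m) : ℝ) = n x)

theorem exists_int_eq_add_of_discrepancy_lt (hn : ∀ x, g x = f x + n x) {a b : ℝ}
    (hab : a ≤ b) (hba : b ≤ a + 1) (hlt : n a < n b) {t : ℝ} (hat : a ≤ t)
    (hta : t ≤ a + 1) : ∃ k : ℤ, g t = g a + k := by
  have hjump : (n a : ℝ) + 1 ≤ n b := by exact_mod_cast hlt
  have hg_period : g b ≤ g a + 1 := g.map_add_one a ▸ g.mono hba
  have hf_mono : f a ≤ f b := f.mono hab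
  have hfb : f b = f a := by linarith [hn a, hn b]
  have hgb : g b = g a + 1 := by linarith [hn a, hn b]
  rcases le_total t b with htb | hbt
  · have hft : f t = f a := le_antisymm (hfb ▸ f.mono htb) (f.mono hat)
    exact ⟨n t - n a, by rw [hn t, hn a, hft]; push_cast; ring⟩
  · have hgt : g t = g b := le_antisymm (hgb ▸ g.map_add_one a ▸ g.mono hta) (g.mono hbt)
    exact ⟨1, by rw [hgt, hgb, Int.cast_one]⟩

theorem forall_exists_int_eq_add_of_discrepancy_lt (hn : ∀ x, g x = f x + n x) {a b : ℝ}
    (hab : a ≤ b) (hba : b ≤ a + 1) (hlt : n a < n b) (t : ℝ) :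
    ∃ k : ℤ, g t = g a + k := by
  have hs : t = (a + Int.fract (t - a)) + ⌊t - a⌋ := by rw [Int.fract]; ring
  obtain ⟨k, hk⟩ := exists_int_eq_add_of_discrepancy_lt hn hab hba hlt
    (le_add_of_nonneg_right (Int.fract_nonneg (t - a)))
    (add_le_add_right (Int.fract_lt_one (t - a)).le a)
  exact ⟨k + ⌊t - a⌋, by nth_rw 1 [hs]; rw [g.map_add_int, hk]; push_cast; ring⟩

theorem exists_forall_exists_int_eq_add_of_discrepancy_ne (hn : ∀ x, g x = f x + n x)
    {x y : ℝ} (hxy : n x ≠ n y) : ∃ a, ∀ t, ∃ k : ℤ, g t = g a + k := by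
  wlog hlt : n x < n y generalizing x y
  · exact this hxy.symm (hxy.symm.lt_of_le (not_lt.1 hlt))
  have hy : n (x + Int.fract (y - x)) = n y := by
    rw [← discrepancy_add_int hn _ ⌊y - x⌋, Int.fract]
    ring_nf
  exact ⟨x, forall_exists_int_eq_add_of_discrepancy_lt hn
    (le_add_of_nonneg_right (Int.fract_nonneg _))
    (add_le_add_right (Int.fract_lt_one _).le x) (hy ▸ hlt)⟩

end Discrepancy

end CircleDeg1Lift

/-- Let `φ` be a non-constant non-decreasing degree one map with good lift `φ̃` and
`h̃₁, h̃₂ ∈ H̃` such that `h̃₁ ∘ φ̃` and `φ̃ ∘ h̃₂` project to the same map of `S¹`, so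
that `h̃₁(φ̃(x)) = φ̃(h̃₂(x)) + n(x)` for some `n : ℝ → ℤ`. Then `n` is constant. -/
theorem translation_discrepancy_constant (φ : Circle1 → Circle1) (φt : ℝ → ℝ)
    (hφ : GoodLift φ φt) (hnc : ∃ a b : Circle1, φ a ≠ φ b)
    (ht₁ ht₂ : ℝ → ℝ) (H₁ : InHtilde ht₁) (H₂ : InHtilde ht₂)
    (n : ℝ → ℤ) (hn : ∀ x : ℝ, ht₁ (φt x) = φt (ht₂ x) + n x) :
    ∀ x y : ℝ, n x = n y := by
  intro x y
  by_contra hxy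
  obtain ⟨a, ha⟩ := CircleDeg1Lift.exists_forall_exists_int_eq_add_of_discrepancy_ne
    (g := H₁.toCircleDeg1Lift * hφ.toCircleDeg1Lift)
    (f := hφ.toCircleDeg1Lift * H₂.toCircleDeg1Lift) hn hxy
  have hφa : ∀ t, ∃ k : ℤ, φt t = φt a + k := fun t =>
    (ha t).imp fun _ hk => CircleDeg1Lift.eq_add_int_of_map_eq
      (f := H₁.toCircleDeg1Lift) H₁.1.injective hk
  obtain ⟨p, q, hpq⟩ := hnc
  exact hpq (hφ.apply_eq_of_forall_exists_int hφa p q)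
end
end

section
/- If ρ₁ is left-semi-conjugate to ρ₂ via some non-decreasing degree one map, then it is left-semi-conjugate to ρ₂ via an upper semicontinuous non-decreasing degree one map. Concretely, if φ̃ is a good lift of a left-semi-conjugacy such that h̃₁∘φ̃ = φ̃∘h̃₂ + m for appropriate lifts and constants m ∈ ℤ, then φ̃'(x) := sup{φ̃(y) : y < x} defines a good lift of a left-semi-conjugacy as well. -/
noncomputable section

/-! The left and right limits `x ↦ sup φ̃(Iio x)` and `x ↦ inf φ̃(Ioi x)` of a monotone `φ̃`
are monotone. An order isomorphism commutes with `sSup`/`sInf` of bounded nonempty sets and maps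
`Iio x` onto `Iio (e x)`, so every relation `e₁ ∘ φ̃ = e₃ ∘ φ̃ ∘ e₂` with order isomorphisms `eᵢ`
passes to both one-sided limits; translation by `1` and the semi-conjugacy equations
`h̃₁ ∘ φ̃ = (· + m) ∘ φ̃ ∘ h̃₂` are relations of this kind. The right limit is upper
semicontinuous, so it is the required `ψ`. -/

open Set

section OneSidedLimits

variable {α β : Type*} [Preorder α] [ConditionallyCompleteLattice β] {f : α → β}

theorem Monotone.bddAbove_image_Iio (hf : Monotone f) (x : α) : BddAbove (f '' Iio x) :=
  ⟨f x, forall_mem_image.2 fun _ hy => hf hy.le⟩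

theorem Monotone.bddBelow_image_Ioi (hf : Monotone f) (x : α) : BddBelow (f '' Ioi x) :=
  hf.dual.bddAbove_image_Iio x

theorem Monotone.csSup_image_Iio_mono (hf : Monotone f) [NoMinOrder α] :
    Monotone fun x => sSup (f '' Iio x) := fun _ y hxy =>
  csSup_le_csSup (hf.bddAbove_image_Iio y) (nonempty_Iio.image f) (image_mono (Iio_subset_Iio hxy))

theorem Monotone.csInf_image_Ioi_mono (hf : Monotone f) [NoMaxOrder α] :
    Monotone fun x => sInf (f '' Ioi x) := fun x _ hxy =>
  csInf_le_csInf (hf.bddBelow_image_Ioi x) (nonempty_Ioi.image f) (image_mono (Ioi_subset_Ioi hxy))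

theorem Monotone.map_csSup_image_Iio_of_semiconj (hf : Monotone f) [NoMinOrder α]
    {e₁ e₃ : β ≃o β} {e₂ : α ≃o α} (h : ∀ y, e₁ (f y) = e₃ (f (e₂ y))) (x : α) :
    e₁ (sSup (f '' Iio x)) = e₃ (sSup (f '' Iio (e₂ x))) := by
  have himage : e₁ '' (f '' Iio x) = e₃ '' (f '' Iio (e₂ x)) := by
    simp only [image_image, h, ← e₂.image_Iio]
  rw [e₁.map_csSup' (nonempty_Iio.image f) (hf.bddAbove_image_Iio x), himage,
    e₃.map_csSup' (nonempty_Iio.image f) (hf.bddAbove_image_Iio _)]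

theorem Monotone.map_csInf_image_Ioi_of_semiconj (hf : Monotone f) [NoMaxOrder α]
    {e₁ e₃ : β ≃o β} {e₂ : α ≃o α} (h : ∀ y, e₁ (f y) = e₃ (f (e₂ y))) (x : α) :
    e₁ (sInf (f '' Ioi x)) = e₃ (sInf (f '' Ioi (e₂ x))) :=
  hf.dual.map_csSup_image_Iio_of_semiconj (e₁ := e₁.dual) (e₃ := e₃.dual) (e₂ := e₂.dual) h x

end OneSidedLimits

theorem Monotone.upperSemicontinuous_csInf_image_Ioi {α β : Type*} [LinearOrder α]
    [TopologicalSpace α] [OrderTopology α] [NoMaxOrder α] [ConditionallyCompleteLinearOrder β]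
    {f : α → β} (hf : Monotone f) : UpperSemicontinuous fun x => sInf (f '' Ioi x) := by
  intro x y hy
  obtain ⟨_, ⟨z, hz, rfl⟩, hzy⟩ := exists_lt_of_csInf_lt (nonempty_Ioi.image f) hy
  filter_upwards [Iio_mem_nhds hz] with w hw
  exact (csInf_le (hf.bddBelow_image_Ioi w) (mem_image_of_mem f hw)).trans_lt hzy

def InHtilde.orderIso {f : ℝ → ℝ} (hf : InHtilde f) : ℝ ≃o ℝ :=
  hf.1.orderIsoOfSurjective f hf.2.1

theorem upper_semicontinuous_semiconjugacy_general {Γ : Type*}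
    (φ : Circle1 → Circle1) (φt : ℝ → ℝ) (hφ : GoodLift φ φt)
    (l₁ l₂ : Γ → ℝ → ℝ) (hl₁ : ∀ γ, InHtilde (l₁ γ)) (hl₂ : ∀ γ, InHtilde (l₂ γ))
    (m : Γ → ℤ) (heq : ∀ (γ : Γ) (x : ℝ), l₁ γ (φt x) = φt (l₂ γ x) + m γ) :
    (Monotone (fun x : ℝ => sSup (φt '' Set.Iio x)) ∧
      (∀ x : ℝ, sSup (φt '' Set.Iio (x + 1)) = sSup (φt '' Set.Iio x) + 1) ∧
      ∀ (γ : Γ) (x : ℝ),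
        l₁ γ (sSup (φt '' Set.Iio x)) = sSup (φt '' Set.Iio (l₂ γ x)) + m γ) ∧
    ∃ ψ : ℝ → ℝ, Monotone ψ ∧ (∀ x : ℝ, ψ (x + 1) = ψ x + 1) ∧
      UpperSemicontinuous ψ ∧
      ∀ (γ : Γ) (x : ℝ), l₁ γ (ψ x) = ψ (l₂ γ x) + m γ := by
  obtain ⟨-, hmono, hper⟩ := hφ
  have hperiodic (y : ℝ) :
      OrderIso.addRight 1 (φt y) = OrderIso.refl ℝ (φt (OrderIso.addRight 1 y)) :=
    (hper y).symm
  have hsemiconj (γ : Γ) (y : ℝ) :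
      (hl₁ γ).orderIso (φt y) = OrderIso.addRight (m γ : ℝ) (φt ((hl₂ γ).orderIso y)) :=
    heq γ y
  refine ⟨⟨hmono.csSup_image_Iio_mono, fun x => ?_, fun γ x => ?_⟩,
    fun x => sInf (φt '' Ioi x), hmono.csInf_image_Ioi_mono, fun x => ?_,
    hmono.upperSemicontinuous_csInf_image_Ioi, fun γ x => ?_⟩
  · exact (hmono.map_csSup_image_Iio_of_semiconj hperiodic x).symm
  · exact hmono.map_csSup_image_Iio_of_semiconj (hsemiconj γ) x
  · exact (hmono.map_csInf_image_Ioi_of_semiconj hperiodic x).symm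
  · exact hmono.map_csInf_image_Ioi_of_semiconj (hsemiconj γ) x

/-- If `ρ₁` is left-semi-conjugate to `ρ₂` via a non-decreasing degree one map `φ` whose
good lift `φ̃` satisfies `h̃₁(γ) ∘ φ̃ = φ̃ ∘ h̃₂(γ) + m(γ)` for lifts `h̃ᵢ(γ)` of
`ρᵢ(γ)` and constants `m(γ) ∈ ℤ`, then `φ̃'(x) := sup{φ̃(y) : y < x}` is again a good
lift (non-decreasing, commuting with integer translations) satisfying the same
semi-conjugacy equations; and moreover `ρ₁` is left-semi-conjugate to `ρ₂` via a
semicontinuous non-decreasing degree one map: there is an upper semicontinuous good lift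
satisfying those equations. -/
theorem upper_semicontinuous_semiconjugacy {Γ : Type*} [Group Γ]
    (ρ₁ ρ₂ : Γ → Circle1 → Circle1)
    (h₁ : IsCircleAction ρ₁) (h₂ : IsCircleAction ρ₂)
    (φ : Circle1 → Circle1) (φt : ℝ → ℝ) (hφ : GoodLift φ φt)
    (hsc : ∀ γ : Γ, ρ₁ γ ∘ φ = φ ∘ ρ₂ γ)
    (l₁ l₂ : Γ → ℝ → ℝ) (hl₁ : ∀ γ, InHtilde (l₁ γ)) (hl₂ : ∀ γ, InHtilde (l₂ γ))
    (hlift₁ : ∀ (γ : Γ) (x : ℝ), ρ₁ γ (↑x) = (↑(l₁ γ x) : Circle1))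
    (hlift₂ : ∀ (γ : Γ) (x : ℝ), ρ₂ γ (↑x) = (↑(l₂ γ x) : Circle1))
    (m : Γ → ℤ) (heq : ∀ (γ : Γ) (x : ℝ), l₁ γ (φt x) = φt (l₂ γ x) + m γ) :
    (Monotone (fun x : ℝ => sSup (φt '' Set.Iio x)) ∧
      (∀ x : ℝ, sSup (φt '' Set.Iio (x + 1)) = sSup (φt '' Set.Iio x) + 1) ∧
      ∀ (γ : Γ) (x : ℝ),
        l₁ γ (sSup (φt '' Set.Iio x)) = sSup (φt '' Set.Iio (l₂ γ x)) + m γ) ∧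
    ∃ ψ : ℝ → ℝ, Monotone ψ ∧ (∀ x : ℝ, ψ (x + 1) = ψ x + 1) ∧
      UpperSemicontinuous ψ ∧
      ∀ (γ : Γ) (x : ℝ), l₁ γ (ψ x) = ψ (l₂ γ x) + m γ :=
  upper_semicontinuous_semiconjugacy_general φ φt hφ l₁ l₂ hl₁ hl₂ m heq
end
end
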